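/- The trace, cost, and termination semantics of Imp and Imp² coincide: for every Imp program term p and every store s, trc_Imp(p)(s) = trc^r_{Imp²}(p)(s), cst_Imp(p)(s) = cst^r_{Imp²}(p)(s), and ter_Imp(p)(s) = ter^r_{Imp²}(p)(s). -/

import Mathlib

/-! # Statement 11: the trace, cost, and termination semantics of Imp and Imp² coincide -/
namespace ImpLang

/-- Arithmetic expressions over the variable set `ℕ`. -/
inductive Ex : Type
  | const : ℤ → Ex
  | var : ℕ → Ex
  | add : Ex → Ex → Ex
  | sub : Ex → Ex → Ex
  | mul : Ex → Ex → Ex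

/-- Variable stores. -/
abbrev Store := ℕ → ℤ

/-- Expression evaluation. -/
def eev : Ex → Store → ℤ
  | .const n, _ => n
  | .var x, s => s x
  | .add e₁ e₂, s => eev e₁ s + eev e₂ s
  | .sub e₁ e₂, s => eev e₁ s - eev e₂ s
  | .mul e₁ e₂, s => eev e₁ s * eev e₂ s

/-- Store update `s[x := n]`. -/
def upd (s : Store) (x : ℕ) (n : ℤ) : Store := fun y => if y = x then n else s y

/-- Imp program terms. -/
inductive P : Type
  | skip : P
  | assign : ℕ → Ex → P
  | whileE : Ex → P → P
  | seq : P → P → P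

/-- The deterministic small-step operational semantics of Imp:
`step p s = .inl (p', s')` means `p,s → p',s'`, and `step p s = .inr s'` means
`p,s ↓ s'`. -/
def step : P → Store → (P × Store) ⊕ Store
  | .skip, s => .inr s
  | .assign x e, s => .inr (upd s x (eev e s))
  | .whileE e p, s =>
      if eev e s = 0 then .inr s else .inl (.seq p (.whileE e p), s)
  | .seq p q, s =>
      match step p s with
      | .inl (p', s') => .inl (.seq p' q, s')
      | .inr s' => .inl (q, s')

/-- Iterated execution of the small-step semantics: `runF c n` is the configuration
reached after `n` steps from `c` (a running configuration `.inl (p,s)` or a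
terminated one `.inr s'`), and `none` if the execution stopped strictly before. -/
def runF : (P × Store) ⊕ Store → ℕ → Option ((P × Store) ⊕ Store)
  | c, 0 => some c
  | c, n+1 =>
      match runF c n with
      | some (.inl (p, s)) => some (step p s)
      | _ => none

/-- The trace map of Imp, encoding the (nonempty, finite or infinite) sequence
`trc(p)(s) ∈ 𝒮^∞` as a function `ℕ → Option (Store ⊕ Store)`: the `n`-th entry is
`some (.inl sₙ)` for an intermediate store produced by a transition `→`,
`some (.inr s')` for the final store produced by `↓`, and `none` beyond the end of a
finite trace. Thus a finite trace `(s₁,…,sₙ,s')` is the function sending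
`0,…,n-1` to `some (.inl sᵢ₊₁)`, `n` to `some (.inr s')` and everything else to
`none`, and an infinite trace `(s₁,s₂,…)` is the function sending each `n` to
`some (.inl sₙ₊₁)`. -/
def trc (p : P) (s : Store) : ℕ → Option (Store ⊕ Store) := fun n =>
  match runF (.inl (p, s)) (n+1) with
  | some (.inl (_, s')) => some (.inl s')
  | some (.inr s') => some (.inr s')
  | none => none

open Classical in
/-- The cost map of Imp: `cst p s = some (n, s')` iff `trc p s = (s₁,…,sₙ,s')` is
finite, and `cst p s = none` (the element `*`) iff `trc p s` is infinite. -/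
noncomputable def cst (p : P) (s : Store) : Option (ℕ × Store) :=
  if h : ∃ ns : ℕ × Store, trc p s ns.1 = some (.inr ns.2) then some h.choose
  else none

/-- The termination map of Imp: `ter p s = some s'` iff `trc p s` is finite with
last element `s'`, and `ter p s = none` (the element `*`) iff `trc p s` is
infinite. -/
noncomputable def ter (p : P) (s : Store) : Option Store := (cst p s).map Prod.snd

end ImpLang
namespace RW

/-- A deterministic reader–writer transition system over a state set `S`:
`rstep p s = c` means `p,s → c`; `wstep c = .inl (d,s)` means `c →ˢ d`;
`wstep c = .inr (.inl d)` means `c → d`; `wstep c = .inr (.inr s)` means `c ↓ s`. -/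
structure DRW (S : Type) where
  Rd : Type
  Wr : Type
  rstep : Rd → S → Wr
  wstep : Wr → (Wr × S) ⊕ (Wr ⊕ S)

variable {S : Type}

/-- The output transition `c →ˢ d`. -/
def OutTr (M : DRW S) (c : M.Wr) (s : S) (d : M.Wr) : Prop := M.wstep c = .inl (d, s)

/-- The silent transition `c → d`. -/
def TauTr (M : DRW S) (c d : M.Wr) : Prop := M.wstep c = .inr (.inl d)

/-- The termination transition `c ↓ s`. -/
def DownTr (M : DRW S) (c : M.Wr) (s : S) : Prop := M.wstep c = .inr (.inr s)

/-- The weak silent transition `c ⇒ d`: a finite chain of silent steps. -/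
def WSil (M : DRW S) : M.Wr → M.Wr → Prop := Relation.ReflTransGen (TauTr M)

/-- The weak output transition `c ⇒ˢ d`: `c ⇒ c' →ˢ d` for some `c'`. -/
def WOut (M : DRW S) (c : M.Wr) (s : S) (d : M.Wr) : Prop :=
  ∃ c', WSil M c c' ∧ OutTr M c' s d

/-- The weak termination transition `c ⇓ s`: `c ⇒ c' ↓ s` for some `c'`. -/
def WDone (M : DRW S) (c : M.Wr) (s : S) : Prop :=
  ∃ c', WSil M c c' ∧ DownTr M c' s

/-- `ReachL M c l d`: from `c` there is a chain of weak output transitions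
producing the list `l` of states and ending in `d`. -/
def ReachL (M : DRW S) : M.Wr → List S → M.Wr → Prop
  | c, [], d => c = d
  | c, s :: l, d => ∃ c', WOut M c s c' ∧ ReachL M c' l d

/-- `TrcEntry M c n v` holds iff the `n`-th entry (0-indexed) of the trace
`trc^w(c)` is `v`, where `v = .inl s` tags an intermediate output state and
`v = .inr s` tags the final state of a finite trace. -/
def TrcEntry (M : DRW S) (c : M.Wr) (n : ℕ) (v : S ⊕ S) : Prop :=
  (∃ l d s d', ReachL M c l d ∧ l.length = n ∧ WOut M d s d' ∧ v = .inl s) ∨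
  (∃ l d s, ReachL M c l d ∧ l.length = n ∧ WDone M d s ∧ v = .inr s)

open Classical in
/-- The writer trace map `trc^w : X_w → 𝒮^∞`, with a (nonempty, finite or infinite)
trace encoded as a function `ℕ → Option (S ⊕ S)`: a finite trace `(s₁,…,sₙ,s)`
sends `0,…,n-1` to `some (.inl sᵢ₊₁)`, `n` to `some (.inr s)` and all larger
numbers to `none`; an infinite trace `(s₁,s₂,…)` sends each `n` to
`some (.inl sₙ₊₁)`. -/
noncomputable def trcW (M : DRW S) (c : M.Wr) : ℕ → Option (S ⊕ S) := fun n =>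
  if h : ∃ v, TrcEntry M c n v then some h.choose else none

/-- The reader trace map `trc^r : X_r → (𝒮^∞)^𝒮`: `trc^r(p)(s) = trc^w(c)` where
`p,s → c`. -/
noncomputable def trcR (M : DRW S) (p : M.Rd) (s : S) : ℕ → Option (S ⊕ S) :=
  trcW M (M.rstep p s)

open Classical in
/-- The writer cost map: `cstW M c = some (n,s)` iff `trc^w(c) = (s₁,…,sₙ,s)` is
finite, and `none` (i.e. `*`) iff `trc^w(c)` is infinite. -/
noncomputable def cstW (M : DRW S) (c : M.Wr) : Option (ℕ × S) :=
  if h : ∃ ns : ℕ × S, trcW M c ns.1 = some (.inr ns.2) then some h.choose else none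

/-- The reader cost map. -/
noncomputable def cstR (M : DRW S) (p : M.Rd) (s : S) : Option (ℕ × S) :=
  cstW M (M.rstep p s)

/-- The writer termination map: the last element of a finite trace, `none` (`*`)
for an infinite trace. -/
noncomputable def terW (M : DRW S) (c : M.Wr) : Option S := (cstW M c).map Prod.snd

/-- The reader termination map. -/
noncomputable def terR (M : DRW S) (p : M.Rd) (s : S) : Option S :=
  (cstR M p s).map Prod.snd

end RW
namespace ImpLang

/-- Writers of the two-sorted language Imp². Readers are exactly the Imp terms `P`. -/
inductive W : Type
  /-- The writer `[p]_s`. -/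
  | run : P → Store → W
  /-- The writer `s.c`. -/
  | out : Store → W → W
  /-- The writer `ret_s`. -/
  | ret : Store → W
  /-- The writer `c ; q`. -/
  | seqW : W → P → W

/-- The reader semantics of Imp²: `rstep2 p s` is the unique writer `c` with
`p,s → c`. -/
def rstep2 : P → Store → W
  | .seq p q, s => .seqW (.run p s) q
  | .skip, s => .ret s
  | .assign x e, s => .ret (upd s x (eev e s))
  | .whileE e p, s =>
      if eev e s = 0 then .ret s
      else .out s (.run (.seq p (.whileE e p)) s)

/-- The writer semantics of Imp²: `wstep2 c = .inl (d,s)` means `c →ˢ d`,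
`wstep2 c = .inr (.inl d)` means `c → d`, and `wstep2 c = .inr (.inr s)` means
`c ↓ s`. -/
def wstep2 : W → (W × Store) ⊕ (W ⊕ Store)
  | .run p s => .inr (.inl (rstep2 p s))
  | .ret s => .inr (.inr s)
  | .out s c => .inl (c, s)
  | .seqW c q =>
      match wstep2 c with
      | .inl (d, s) => .inl (.seqW d q, s)
      | .inr (.inl d) => .inr (.inl (.seqW d q))
      | .inr (.inr s') => .inl (.run q s', s')

/-- The operational model of Imp² as a deterministic reader–writer transition
system. -/
def Imp2 : RW.DRW Store where
  Rd := P
  Wr := W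
  rstep := rstep2
  wstep := wstep2

end ImpLang

/-! Both transition systems are deterministic, so a weak transition of an Imp² writer is
unique and unaffected by silent steps taken before it. Each Imp step `p,s → p',s'` is
matched by a weak output `[p]_s ⇒^{s'} d` with `[p']_{s'} ⇒ d`, and each `p,s ↓ s'` by
`[p]_s ⇓ s'`; an induction on the position in the trace then identifies the two traces,
and cost and termination are read off the traces in the same way on both sides. -/

namespace RW

variable {S : Type} {M : DRW S}

def Stable (M : DRW S) (c : M.Wr) : Prop := ∀ d, ¬ TauTr M c d

theorem tauTr_rightUnique : Relator.RightUnique (TauTr M) := fun _ _ _ h h' => by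
  unfold TauTr at h h'
  simpa [h] using h'

theorem OutTr.stable {c d : M.Wr} {s : S} (h : OutTr M c s d) : Stable M c := fun _ h' => by
  unfold OutTr at h; unfold TauTr at h'
  simp [h] at h'

theorem DownTr.stable {c : M.Wr} {s : S} (h : DownTr M c s) : Stable M c := fun _ h' => by
  unfold DownTr at h; unfold TauTr at h'
  simp [h] at h'

theorem Stable.eq_of_wSil {c d : M.Wr} (hc : Stable M c) (h : WSil M c d) : c = d := by
  rcases Relation.ReflTransGen.cases_head h with rfl | ⟨b, hb, -⟩
  · rfl
  · exact (hc b hb).elim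

theorem wSil_of_wSil_of_stable {c c' e : M.Wr} (h : WSil M c c') (he : WSil M c e)
    (hs : Stable M e) : WSil M c' e := by
  rcases Relation.ReflTransGen.total_of_right_unique tauTr_rightUnique h he with h' | h'
  · exact h'
  · rw [hs.eq_of_wSil h']
    exact .refl

theorem wSil_stable_unique {c e e' : M.Wr} (he : WSil M c e) (he' : WSil M c e')
    (hs : Stable M e) (hs' : Stable M e') : e = e' :=
  hs'.eq_of_wSil (wSil_of_wSil_of_stable he' he hs) |>.symm

theorem WOut.unique {c d d' : M.Wr} {s s' : S} (h : WOut M c s d) (h' : WOut M c s' d') :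
    s = s' ∧ d = d' := by
  obtain ⟨e, he, ho⟩ := h
  obtain ⟨e', he', ho'⟩ := h'
  obtain rfl := wSil_stable_unique he he' ho.stable ho'.stable
  unfold OutTr at ho ho'
  simp_all

theorem WDone.unique {c : M.Wr} {s s' : S} (h : WDone M c s) (h' : WDone M c s') : s = s' := by
  obtain ⟨e, he, ho⟩ := h
  obtain ⟨e', he', ho'⟩ := h'
  obtain rfl := wSil_stable_unique he he' ho.stable ho'.stable
  unfold DownTr at ho ho'
  simp_all

theorem WOut.not_wDone {c d : M.Wr} {s s' : S} (h : WOut M c s d) : ¬ WDone M c s' := by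
  rintro ⟨e', he', ho'⟩
  obtain ⟨e, he, ho⟩ := h
  obtain rfl := wSil_stable_unique he he' ho.stable ho'.stable
  unfold OutTr at ho; unfold DownTr at ho'
  simp [ho] at ho'

theorem wOut_iff_of_wSil {c c' d : M.Wr} {s : S} (h : WSil M c c') :
    WOut M c s d ↔ WOut M c' s d :=
  ⟨fun ⟨e, he, ho⟩ => ⟨e, wSil_of_wSil_of_stable h he ho.stable, ho⟩,
    fun ⟨e, he, ho⟩ => ⟨e, h.trans he, ho⟩⟩

theorem wDone_iff_of_wSil {c c' : M.Wr} {s : S} (h : WSil M c c') :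
    WDone M c s ↔ WDone M c' s :=
  ⟨fun ⟨e, he, ho⟩ => ⟨e, wSil_of_wSil_of_stable h he ho.stable, ho⟩,
    fun ⟨e, he, ho⟩ => ⟨e, h.trans he, ho⟩⟩

theorem trcEntry_zero {c : M.Wr} {v : S ⊕ S} :
    TrcEntry M c 0 v ↔
      (∃ s d, WOut M c s d ∧ v = .inl s) ∨ (∃ s, WDone M c s ∧ v = .inr s) := by
  constructor
  · rintro (⟨l, d, s, d', hr, hl, ho, hv⟩ | ⟨l, d, s, hr, hl, ho, hv⟩) <;>
      obtain rfl : l = [] := List.length_eq_zero_iff.1 hl <;> obtain rfl : c = d := hr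
    · exact Or.inl ⟨s, d', ho, hv⟩
    · exact Or.inr ⟨s, ho, hv⟩
  · rintro (⟨s, d, ho, hv⟩ | ⟨s, ho, hv⟩)
    · exact Or.inl ⟨[], c, s, d, rfl, rfl, ho, hv⟩
    · exact Or.inr ⟨[], c, s, rfl, rfl, ho, hv⟩

theorem trcEntry_succ {c : M.Wr} {n : ℕ} {v : S ⊕ S} :
    TrcEntry M c (n + 1) v ↔ ∃ s c', WOut M c s c' ∧ TrcEntry M c' n v := by
  constructor
  · rintro (⟨l, d, s, d', hr, hl, ho, hv⟩ | ⟨l, d, s, hr, hl, ho, hv⟩) <;>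
      obtain ⟨s₀, l, rfl⟩ := List.exists_cons_of_length_eq_add_one hl <;>
      obtain ⟨c', ho', hr⟩ := hr
    · exact ⟨s₀, c', ho', Or.inl ⟨l, d, s, d', hr, by simpa using hl, ho, hv⟩⟩
    · exact ⟨s₀, c', ho', Or.inr ⟨l, d, s, hr, by simpa using hl, ho, hv⟩⟩
  · rintro ⟨s₀, c', ho', (⟨l, d, s, d', hr, rfl, ho, hv⟩ | ⟨l, d, s, hr, rfl, ho, hv⟩)⟩
    · exact Or.inl ⟨s₀ :: l, d, s, d', ⟨c', ho', hr⟩, rfl, ho, hv⟩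
    · exact Or.inr ⟨s₀ :: l, d, s, ⟨c', ho', hr⟩, rfl, ho, hv⟩

theorem trcEntry_iff_of_wSil {c c' : M.Wr} {n : ℕ} {v : S ⊕ S} (h : WSil M c c') :
    TrcEntry M c n v ↔ TrcEntry M c' n v := by
  cases n with
  | zero => simp only [trcEntry_zero, wOut_iff_of_wSil h, wDone_iff_of_wSil h]
  | succ n => simp only [trcEntry_succ, wOut_iff_of_wSil h]

theorem trcEntry_zero_of_wOut {c d : M.Wr} {s : S} {v : S ⊕ S} (h : WOut M c s d) :
    TrcEntry M c 0 v ↔ v = .inl s := by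
  rw [trcEntry_zero]
  constructor
  · rintro (⟨s', d', h', rfl⟩ | ⟨s', h', -⟩)
    · rw [(h.unique h').1]
    · exact (h.not_wDone h').elim
  · rintro rfl
    exact Or.inl ⟨s, d, h, rfl⟩

theorem trcEntry_succ_of_wOut {c d : M.Wr} {s : S} {n : ℕ} {v : S ⊕ S} (h : WOut M c s d) :
    TrcEntry M c (n + 1) v ↔ TrcEntry M d n v := by
  rw [trcEntry_succ]
  constructor
  · rintro ⟨s', d', h', hE⟩
    rwa [(h.unique h').2]
  · exact fun hE => ⟨s, d, h, hE⟩

theorem trcEntry_zero_of_wDone {c : M.Wr} {s : S} {v : S ⊕ S} (h : WDone M c s) :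
    TrcEntry M c 0 v ↔ v = .inr s := by
  rw [trcEntry_zero]
  constructor
  · rintro (⟨s', d', h', -⟩ | ⟨s', h', rfl⟩)
    · exact (h'.not_wDone h).elim
    · rw [h.unique h']
  · rintro rfl
    exact Or.inr ⟨s, h, rfl⟩

theorem not_trcEntry_succ_of_wDone {c : M.Wr} {s : S} {n : ℕ} {v : S ⊕ S} (h : WDone M c s) :
    ¬ TrcEntry M c (n + 1) v := by
  rw [trcEntry_succ]
  rintro ⟨s', d', h', -⟩
  exact h'.not_wDone h

theorem trcW_eq_of_trcEntry_iff {c : M.Wr} {f : ℕ → Option (S ⊕ S)}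
    (h : ∀ n v, TrcEntry M c n v ↔ f n = some v) : trcW M c = f := by
  funext n
  unfold trcW
  split_ifs with hn
  · exact ((h n _).1 hn.choose_spec).symm
  · cases hf : f n with
    | none => rfl
    | some v => exact (hn ⟨v, (h n v).2 hf⟩).elim

end RW

namespace ImpLang

open RW

theorem runF_inl_succ (p : P) (s : Store) (n : ℕ) :
    runF (.inl (p, s)) (n + 1) = runF (step p s) n := by
  induction n with
  | zero => rfl
  | succ n ih => rw [runF, ih, runF]

theorem runF_inr_succ (s : Store) (n : ℕ) : runF (.inr s) (n + 1) = none := by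
  induction n with
  | zero => rfl
  | succ n ih => rw [runF, ih]

section Trace

variable {p p' : P} {s s' : Store}

theorem trc_zero_of_step_inl (h : step p s = .inl (p', s')) : trc p s 0 = some (.inl s') := by
  simp only [trc, h, runF]

theorem trc_succ_of_step_inl (h : step p s = .inl (p', s')) (n : ℕ) :
    trc p s (n + 1) = trc p' s' n := by
  simp only [trc, runF_inl_succ p s, h]

theorem trc_zero_of_step_inr (h : step p s = .inr s') : trc p s 0 = some (.inr s') := by
  simp only [trc, h, runF]

theorem trc_succ_of_step_inr (h : step p s = .inr s') (n : ℕ) : trc p s (n + 1) = none := by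
  simp only [trc, runF_inl_succ p s, h, runF_inr_succ]

end Trace

theorem tauTr_run (p : P) (s : Store) : TauTr Imp2 (W.run p s) (rstep2 p s) := rfl

section Seq

variable {c d : W} {q : P} {s : Store}

theorem tauTr_seqW (h : TauTr Imp2 c d) : TauTr Imp2 (W.seqW c q) (W.seqW d q) := by
  change wstep2 c = _ at h
  change wstep2 (W.seqW c q) = _
  simp only [wstep2, h]
  rfl

theorem wSil_seqW (h : WSil Imp2 c d) : WSil Imp2 (W.seqW c q) (W.seqW d q) := by
  induction h with
  | refl => exact .refl
  | tail _ hb ih => exact ih.tail (tauTr_seqW hb)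

theorem wOut_seqW (h : WOut Imp2 c s d) : WOut Imp2 (W.seqW c q) s (W.seqW d q) := by
  obtain ⟨e, he, ho⟩ := h
  change wstep2 e = _ at ho
  exact ⟨W.seqW e q, wSil_seqW he, by change wstep2 (W.seqW e q) = _; simp only [wstep2, ho]; rfl⟩

theorem wDone_seqW (h : WDone Imp2 c s) : WOut Imp2 (W.seqW c q) s (W.run q s) := by
  obtain ⟨e, he, ho⟩ := h
  change wstep2 e = _ at ho
  exact ⟨W.seqW e q, wSil_seqW he, by change wstep2 (W.seqW e q) = _; simp only [wstep2, ho]; rfl⟩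

end Seq

def Simulates : (P × Store) ⊕ Store → W → Prop
  | .inl (p', s'), c => ∃ d, WOut Imp2 c s' d ∧ WSil Imp2 (W.run p' s') d
  | .inr s', c => WDone Imp2 c s'

theorem run_simulates_step (p : P) (s : Store) : Simulates (step p s) (W.run p s) := by
  induction p generalizing s with
  | skip => exact ⟨_, .single (tauTr_run _ _), rfl⟩
  | assign x e => exact ⟨_, .single (tauTr_run _ _), rfl⟩
  | whileE e p =>
      have hrun := tauTr_run (.whileE e p) s
      by_cases he : eev e s = 0
      · simp only [rstep2, he, if_true] at hrun
        simp only [step, he, if_true]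
        exact ⟨_, .single hrun, rfl⟩
      · simp only [rstep2, he, if_false] at hrun
        simp only [step, he, if_false]
        exact ⟨_, ⟨_, .single hrun, rfl⟩, .refl⟩
  | seq p q ihp =>
      have hrun : WSil Imp2 (W.run (.seq p q) s) (W.seqW (W.run p s) q) :=
        .single (tauTr_run _ _)
      specialize ihp s
      cases hstep : step p s with
      | inl ps₀ =>
          obtain ⟨p₀, s₀⟩ := ps₀
          rw [hstep] at ihp
          obtain ⟨d, hout, hsil⟩ := ihp
          simp only [step, hstep]
          exact ⟨_, (wOut_iff_of_wSil hrun).2 (wOut_seqW hout),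
            Relation.ReflTransGen.head (tauTr_run _ _) (wSil_seqW hsil)⟩
      | inr s₀ =>
          rw [hstep] at ihp
          simp only [step, hstep]
          exact ⟨_, (wOut_iff_of_wSil hrun).2 (wDone_seqW ihp), .refl⟩

theorem trcEntry_run_iff (n : ℕ) (p : P) (s : Store) (v : Store ⊕ Store) :
    TrcEntry Imp2 (W.run p s) n v ↔ trc p s n = some v := by
  induction n generalizing p s with
  | zero =>
      have hsim := run_simulates_step p s
      cases hstep : step p s with
      | inl ps' =>
          rw [hstep] at hsim
          obtain ⟨d, hout, -⟩ := hsim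
          rw [trcEntry_zero_of_wOut hout, trc_zero_of_step_inl hstep, Option.some_inj, eq_comm]
      | inr s' =>
          rw [hstep] at hsim
          rw [trcEntry_zero_of_wDone hsim, trc_zero_of_step_inr hstep, Option.some_inj, eq_comm]
  | succ n ih =>
      have hsim := run_simulates_step p s
      cases hstep : step p s with
      | inl ps' =>
          rw [hstep] at hsim
          obtain ⟨d, hout, hsil⟩ := hsim
          rw [trcEntry_succ_of_wOut hout, ← trcEntry_iff_of_wSil hsil, ih,
            trc_succ_of_step_inl hstep]
      | inr s' =>
          rw [hstep] at hsim
          simp only [not_trcEntry_succ_of_wDone hsim, trc_succ_of_step_inr hstep, reduceCtorEq]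

theorem trc_eq_trcR (p : P) (s : Store) : trc p s = trcR Imp2 p s :=
  (trcW_eq_of_trcEntry_iff fun n v =>
    (trcEntry_iff_of_wSil (.single (tauTr_run p s))).symm.trans (trcEntry_run_iff n p s v)).symm

/-- for every Imp program `p` and store `s`, the trace, cost and
termination semantics of `p` as an Imp program and as an Imp² reader coincide. -/
theorem imp_imp2_semantics_coincide (p : P) (s : Store) :
    trc p s = trcR Imp2 p s ∧ cst p s = cstR Imp2 p s ∧ ter p s = terR Imp2 p s := by
  have htrc := trc_eq_trcR p s
  have hcst : cst p s = cstR Imp2 p s := by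
    rw [cst, htrc]
    rfl
  exact ⟨htrc, hcst, by simp only [ter, terR, hcst]⟩

end ImpLang
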